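/- arXiv:2601.04014 — 3 statements merged into one kernel-verified Lean document; each statement's English description precedes it below -/
import Mathlib

section
/- For every positive integer k, the series F_{k,1}(q) := Σ_{n≥0} ((q^{2n+2};q^2)_∞ (q^{2n+2k};q^2)_∞ / (q^{2n+1};q^2)_∞^2) · q^{2n+1} equals Σ_{n≥0} (q^{2k-1};q^2)_n · q^{n+1} / (q;q^2)_{n+1}. -/
open Finset

/-- Finite q-Pochhammer symbol `(a;q)_n`. -/
noncomputable def qPoch (a q : ℂ) (n : ℕ) : ℂ := ∏ j ∈ Finset.range n, (1 - a * q ^ j)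

/-- Infinite q-Pochhammer symbol `(a;q)_∞`. -/
noncomputable def qPochInf (a q : ℂ) : ℂ := ∏' j : ℕ, (1 - a * q ^ j)

section Aux

variable {x a z Q : ℂ}

lemma factor_ne_zero (hx : ‖x‖ < 1) (hQ : ‖Q‖ < 1) (j : ℕ) : 1 - x * Q ^ j ≠ 0 := by
  intro h
  have h1 : ‖x * Q ^ j‖ < 1 := by
    calc ‖x * Q ^ j‖ = ‖x‖ * ‖Q‖ ^ j := by rw [norm_mul, norm_pow]
    _ ≤ ‖x‖ * 1 := by
        gcongr
        exact pow_le_one₀ (norm_nonneg _) hQ.le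
    _ < 1 := by simpa using hx
  have : x * Q ^ j = 1 := by linear_combination -h
  rw [this] at h1; simp at h1

lemma summable_log_factor (hx : ‖x‖ < 1) (hQ : ‖Q‖ < 1) :
    Summable (fun j : ℕ => Complex.log (1 - x * Q ^ j)) := by
  have hgeo : Summable (fun j : ℕ => (3/2 : ℝ) * (‖x‖ * ‖Q‖ ^ j)) :=
    ((summable_geometric_of_lt_one (norm_nonneg _) hQ).mul_left _).mul_left _
  apply Summable.of_norm_bounded_eventually_nat hgeo
  have htend : Filter.Tendsto (fun j : ℕ => ‖x‖ * ‖Q‖ ^ j) Filter.atTop (nhds 0) := by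
    simpa using (tendsto_pow_atTop_nhds_zero_of_lt_one (norm_nonneg _) hQ).const_mul ‖x‖
  filter_upwards [htend.eventually_le_const (by norm_num : (0:ℝ) < 1/2)] with j hj
  have hb : ‖-(x * Q ^ j)‖ ≤ 1/2 := by
    rw [norm_neg, norm_mul, norm_pow]; exact hj
  calc ‖Complex.log (1 - x * Q ^ j)‖ = ‖Complex.log (1 + -(x * Q ^ j))‖ := by ring_nf
  _ ≤ 3/2 * ‖-(x * Q ^ j)‖ := Complex.norm_log_one_add_half_le_self hb
  _ = 3/2 * (‖x‖ * ‖Q‖ ^ j) := by rw [norm_neg, norm_mul, norm_pow]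

lemma multipliable_factor (hx : ‖x‖ < 1) (hQ : ‖Q‖ < 1) :
    Multipliable (fun j : ℕ => 1 - x * Q ^ j) := by
  have := Complex.multipliable_of_summable_log (summable_log_factor hx hQ)
  exact this

lemma qPochInf_ne_zero (hx : ‖x‖ < 1) (hQ : ‖Q‖ < 1) : qPochInf x Q ≠ 0 := by
  have h2 := Complex.cexp_tsum_eq_tprod (f := fun j : ℕ => 1 - x * Q ^ j)
    (fun j => factor_ne_zero hx hQ j) (summable_log_factor hx hQ)
  rw [qPochInf, ← h2]
  exact Complex.exp_ne_zero _

lemma norm_mul_pow_lt (hx : ‖x‖ < 1) (hQ : ‖Q‖ < 1) (N : ℕ) : ‖x * Q ^ N‖ < 1 := by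
  calc ‖x * Q ^ N‖ = ‖x‖ * ‖Q‖ ^ N := by rw [norm_mul, norm_pow]
  _ ≤ ‖x‖ * 1 := by gcongr; exact pow_le_one₀ (norm_nonneg _) hQ.le
  _ < 1 := by simpa using hx

lemma qPochInf_shift (hx : ‖x‖ < 1) (hQ : ‖Q‖ < 1) (N : ℕ) :
    qPochInf x Q = qPoch x Q N * qPochInf (x * Q ^ N) Q := by
  have hm : Multipliable (fun j : ℕ => 1 - x * Q ^ N * Q ^ j) :=
    multipliable_factor (norm_mul_pow_lt hx hQ N) hQ
  have hm' : Multipliable (fun j : ℕ => 1 - x * Q ^ (j + N)) := by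
    apply (multipliable_congr _).mpr hm
    intro j; rw [pow_add]; ring
  have h := Multipliable.prod_mul_tprod_nat_mul' (f := fun j : ℕ => 1 - x * Q ^ j) (k := N) hm'
  rw [qPochInf, ← h, qPoch]
  congr 1
  rw [qPochInf]
  apply tprod_congr
  intro j
  show 1 - x * Q ^ (j + N) = 1 - x * Q ^ N * Q ^ j
  rw [pow_add]; ring


lemma qPoch_succ (a Q : ℂ) (n : ℕ) : qPoch a Q (n + 1) = qPoch a Q n * (1 - a * Q ^ n) :=
  Finset.prod_range_succ _ _

lemma qPoch_ne_zero (hx : ‖x‖ < 1) (hQ : ‖Q‖ < 1) (n : ℕ) : qPoch x Q n ≠ 0 := by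
  apply Finset.prod_ne_zero_iff.mpr
  intro j _
  exact factor_ne_zero hx hQ j

lemma norm_qPoch_le (hQ : ‖Q‖ < 1) (a : ℂ) (n : ℕ) :
    ‖qPoch a Q n‖ ≤ Real.exp (‖a‖ * (1 - ‖Q‖)⁻¹) := by
  have h01 : (0:ℝ) < 1 - ‖Q‖ := by linarith
  have hsum : ∑ j ∈ Finset.range n, ‖a‖ * ‖Q‖ ^ j ≤ ‖a‖ * (1 - ‖Q‖)⁻¹ := by
    rw [← Finset.mul_sum]
    apply mul_le_mul_of_nonneg_left _ (norm_nonneg a)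
    calc ∑ j ∈ Finset.range n, ‖Q‖ ^ j
        ≤ ∑' j : ℕ, ‖Q‖ ^ j :=
          Summable.sum_le_tsum _ (fun j _ => pow_nonneg (norm_nonneg _) _)
            (summable_geometric_of_lt_one (norm_nonneg _) hQ)
    _ = (1 - ‖Q‖)⁻¹ := tsum_geometric_of_lt_one (norm_nonneg _) hQ
  calc ‖qPoch a Q n‖ = ∏ j ∈ Finset.range n, ‖1 - a * Q ^ j‖ := norm_prod _ _
  _ ≤ ∏ j ∈ Finset.range n, Real.exp (‖a‖ * ‖Q‖ ^ j) := by
      apply Finset.prod_le_prod (fun j _ => norm_nonneg _)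
      intro j _
      calc ‖1 - a * Q ^ j‖ ≤ ‖(1:ℂ)‖ + ‖a * Q ^ j‖ := norm_sub_le _ _
      _ = 1 + ‖a‖ * ‖Q‖ ^ j := by rw [norm_one, norm_mul, norm_pow]
      _ ≤ Real.exp (‖a‖ * ‖Q‖ ^ j) := by
          have := Real.add_one_le_exp (‖a‖ * ‖Q‖ ^ j); linarith
  _ = Real.exp (∑ j ∈ Finset.range n, ‖a‖ * ‖Q‖ ^ j) := (Real.exp_sum _ _).symm
  _ ≤ _ := Real.exp_le_exp.mpr hsum

lemma norm_qPoch_lower (hx : ‖x‖ < 1) (hQ : ‖Q‖ < 1) (n : ℕ) :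
    Real.exp (-(‖x‖ * (1 - ‖Q‖)⁻¹ * (1 - ‖x‖)⁻¹)) ≤ ‖qPoch x Q n‖ := by
  have h01 : (0:ℝ) < 1 - ‖Q‖ := by linarith
  have h02 : (0:ℝ) < 1 - ‖x‖ := by linarith
  have key : ∀ j : ℕ, Real.exp (-(‖x‖ * ‖Q‖ ^ j * (1 - ‖x‖)⁻¹)) ≤ ‖1 - x * Q ^ j‖ := by
    intro j
    set t : ℝ := ‖x‖ * ‖Q‖ ^ j with ht
    have ht0 : 0 ≤ t := mul_nonneg (norm_nonneg _) (pow_nonneg (norm_nonneg _) _)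
    have htx : t ≤ ‖x‖ := by
      calc t = ‖x‖ * ‖Q‖ ^ j := ht
      _ ≤ ‖x‖ * 1 := by
          apply mul_le_mul_of_nonneg_left (pow_le_one₀ (norm_nonneg _) hQ.le) (norm_nonneg _)
      _ = ‖x‖ := mul_one _
    have ht1 : t < 1 := lt_of_le_of_lt htx hx
    have hlow : 1 - t ≤ ‖1 - x * Q ^ j‖ := by
      have := norm_sub_norm_le (1 : ℂ) (x * Q ^ j)
      rw [norm_one, norm_mul, norm_pow] at this
      linarith
    have hexp : Real.exp (-(t * (1 - ‖x‖)⁻¹)) ≤ 1 - t := by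
      have h1t : (0:ℝ) < 1 - t := by linarith
      have hstep : (1 - t)⁻¹ ≤ Real.exp (t * (1 - ‖x‖)⁻¹) := by
        have h2 : 1 + t * (1 - t)⁻¹ ≤ Real.exp (t * (1 - t)⁻¹) := by
          have := Real.add_one_le_exp (t * (1 - t)⁻¹); linarith
        have h3 : (1 - t)⁻¹ = 1 + t * (1 - t)⁻¹ := by field_simp; ring
        have h4 : t * (1 - t)⁻¹ ≤ t * (1 - ‖x‖)⁻¹ := by
          apply mul_le_mul_of_nonneg_left _ ht0
          apply inv_anti₀ h02
          linarith
        calc (1 - t)⁻¹ = 1 + t * (1 - t)⁻¹ := h3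
        _ ≤ Real.exp (t * (1 - t)⁻¹) := h2
        _ ≤ Real.exp (t * (1 - ‖x‖)⁻¹) := Real.exp_le_exp.mpr h4
      rw [Real.exp_neg]
      calc (Real.exp (t * (1 - ‖x‖)⁻¹))⁻¹ ≤ ((1 - t)⁻¹)⁻¹ := by
            apply inv_anti₀ (inv_pos.mpr h1t) hstep
      _ = 1 - t := inv_inv _
    exact le_trans hexp hlow
  calc Real.exp (-(‖x‖ * (1 - ‖Q‖)⁻¹ * (1 - ‖x‖)⁻¹))
      ≤ Real.exp (-(∑ j ∈ Finset.range n, ‖x‖ * ‖Q‖ ^ j * (1 - ‖x‖)⁻¹)) := by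
        apply Real.exp_le_exp.mpr
        apply neg_le_neg
        rw [← Finset.sum_mul, ← Finset.mul_sum]
        apply mul_le_mul_of_nonneg_right _ (le_of_lt (by positivity))
        apply mul_le_mul_of_nonneg_left _ (norm_nonneg x)
        calc ∑ j ∈ Finset.range n, ‖Q‖ ^ j
            ≤ ∑' j : ℕ, ‖Q‖ ^ j :=
              Summable.sum_le_tsum _ (fun j _ => pow_nonneg (norm_nonneg _) _)
                (summable_geometric_of_lt_one (norm_nonneg _) hQ)
        _ = (1 - ‖Q‖)⁻¹ := tsum_geometric_of_lt_one (norm_nonneg _) hQ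
  _ = ∏ j ∈ Finset.range n, Real.exp (-(‖x‖ * ‖Q‖ ^ j * (1 - ‖x‖)⁻¹)) := by
        rw [← Real.exp_sum, ← Finset.sum_neg_distrib]
  _ ≤ ∏ j ∈ Finset.range n, ‖1 - x * Q ^ j‖ := by
        apply Finset.prod_le_prod (fun j _ => le_of_lt (Real.exp_pos _)) (fun j _ => key j)
  _ = ‖qPoch x Q n‖ := (norm_prod _ _).symm


end Aux

noncomputable def qC (a Q : ℂ) (n : ℕ) : ℂ := qPoch a Q n / qPoch Q Q n

noncomputable def qF (a Q z : ℂ) : ℂ := ∑' n : ℕ, qC a Q n * z ^ n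

section C
variable {x a z Q : ℂ}

lemma qC_zero (a Q : ℂ) : qC a Q 0 = 1 := by simp [qC, qPoch]

lemma qC_bound (hQ : ‖Q‖ < 1) (a : ℂ) :
    ∃ B : ℝ, 0 < B ∧ ∀ n, ‖qC a Q n‖ ≤ B := by
  refine ⟨Real.exp (‖a‖ * (1 - ‖Q‖)⁻¹) * (Real.exp (-(‖Q‖ * (1 - ‖Q‖)⁻¹ * (1 - ‖Q‖)⁻¹)))⁻¹,
    by positivity, fun n => ?_⟩
  rw [qC, norm_div]
  rw [div_eq_mul_inv]
  apply mul_le_mul (norm_qPoch_le hQ a n) _ (by positivity) (le_of_lt (Real.exp_pos _))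
  apply inv_anti₀ (Real.exp_pos _) (norm_qPoch_lower hQ hQ n)

lemma qC_summable_norm (hQ : ‖Q‖ < 1) (a : ℂ) (hz : ‖z‖ < 1) :
    Summable (fun n : ℕ => ‖qC a Q n * z ^ n‖) := by
  obtain ⟨B, hB, hbd⟩ := qC_bound hQ a
  refine Summable.of_nonneg_of_le (fun n => norm_nonneg _) (fun n => ?_)
    (((summable_geometric_of_lt_one (norm_nonneg _) hz)).mul_left B)
  rw [norm_mul, norm_pow]
  exact mul_le_mul_of_nonneg_right (hbd n) (pow_nonneg (norm_nonneg _) _)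

lemma qC_summable (hQ : ‖Q‖ < 1) (a : ℂ) (hz : ‖z‖ < 1) :
    Summable (fun n : ℕ => qC a Q n * z ^ n) :=
  (qC_summable_norm hQ a hz).of_norm

lemma qC_rec (hQ : ‖Q‖ < 1) (a : ℂ) (n : ℕ) :
    qC a Q (n + 1) * (1 - Q ^ (n + 1)) = qC a Q n * (1 - a * Q ^ n) := by
  have hden : qPoch Q Q n ≠ 0 := qPoch_ne_zero hQ hQ n
  have hden' : qPoch Q Q (n + 1) ≠ 0 := qPoch_ne_zero hQ hQ (n + 1)
  have h1 : qPoch a Q (n + 1) = qPoch a Q n * (1 - a * Q ^ n) := qPoch_succ a Q n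
  have h2 : qPoch Q Q (n + 1) = qPoch Q Q n * (1 - Q * Q ^ n) := qPoch_succ Q Q n
  have h3 : (1 : ℂ) - Q * Q ^ n = 1 - Q ^ (n + 1) := by rw [pow_succ]; ring
  rw [qC, qC, h1, h2, h3]
  have h4 : (1 : ℂ) - Q ^ (n + 1) ≠ 0 := by
    have := factor_ne_zero hQ hQ n
    rw [h3] at this; exact this
  field_simp

end C

section D
variable {x a z Q : ℂ}

lemma one_sub_mul_tsum (c : ℕ → ℂ) (w z : ℂ) (hc : Summable fun n : ℕ => c n * z ^ n) :
    (1 - w) * (∑' n : ℕ, c n * z ^ n) =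
      c 0 + ∑' n : ℕ, (c (n + 1) * z ^ (n + 1) - w * (c n * z ^ n)) := by
  have hc' : Summable (fun n : ℕ => c (n + 1) * z ^ (n + 1)) :=
    (summable_nat_add_iff (f := fun n : ℕ => c n * z ^ n) 1).mpr hc
  have hA : (∑' n : ℕ, c n * z ^ n) = c 0 + ∑' n : ℕ, c (n + 1) * z ^ (n + 1) := by
    rw [Summable.tsum_eq_zero_add hc]; simp
  calc (1 - w) * (∑' n : ℕ, c n * z ^ n)
      = (∑' n : ℕ, c n * z ^ n) - w * (∑' n : ℕ, c n * z ^ n) := by ring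
  _ = (∑' n : ℕ, c n * z ^ n) - ∑' n : ℕ, w * (c n * z ^ n) := by
      rw [tsum_mul_left]
  _ = (c 0 + ∑' n : ℕ, c (n + 1) * z ^ (n + 1)) - ∑' n : ℕ, w * (c n * z ^ n) := by
      nth_rewrite 1 [hA]; rfl
  _ = c 0 + ((∑' n : ℕ, c (n + 1) * z ^ (n + 1)) - ∑' n : ℕ, w * (c n * z ^ n)) := by ring
  _ = c 0 + ∑' n : ℕ, (c (n + 1) * z ^ (n + 1) - w * (c n * z ^ n)) := by
      rw [← Summable.tsum_sub hc' (hc.mul_left w)]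

lemma qF_funct_eq (hQ : ‖Q‖ < 1) (a : ℂ) (hz : ‖z‖ < 1) :
    (1 - z) * qF a Q z = (1 - a * z) * qF a Q (Q * z) := by
  have hS : Summable (fun n : ℕ => qC a Q n * z ^ n) := qC_summable hQ a hz
  have hQz : ‖Q * z‖ < 1 := by
    calc ‖Q * z‖ = ‖Q‖ * ‖z‖ := norm_mul _ _
    _ ≤ 1 * ‖z‖ := mul_le_mul_of_nonneg_right hQ.le (norm_nonneg _)
    _ = ‖z‖ := one_mul _
    _ < 1 := hz
  have hS2 : Summable (fun n : ℕ => (qC a Q n * Q ^ n) * z ^ n) := by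
    apply (summable_congr _).mpr (qC_summable hQ a hQz)
    intro n; rw [mul_pow]; ring
  have hF2 : qF a Q (Q * z) = ∑' n : ℕ, (qC a Q n * Q ^ n) * z ^ n := by
    rw [qF]; apply tsum_congr; intro n; rw [mul_pow]; ring
  rw [qF, hF2, one_sub_mul_tsum _ _ _ hS, one_sub_mul_tsum _ _ _ hS2]
  rw [qC_zero]
  simp only [pow_zero, mul_one]
  congr 1
  apply tsum_congr
  intro n
  have hrec := qC_rec hQ a n
  linear_combination (z ^ (n + 1)) * hrec

lemma qF_iterate (hQ : ‖Q‖ < 1) (a : ℂ) (hz : ‖z‖ < 1) (N : ℕ) :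
    qF a Q z * qPoch z Q N = qPoch (a * z) Q N * qF a Q (Q ^ N * z) := by
  induction N with
  | zero => simp [qPoch]
  | succ N ih =>
    have hz' : ‖Q ^ N * z‖ < 1 := by
      calc ‖Q ^ N * z‖ = ‖z * Q ^ N‖ := by rw [mul_comm]
      _ < 1 := norm_mul_pow_lt hz hQ N
    have hfe := qF_funct_eq hQ a hz'
    calc qF a Q z * qPoch z Q (N + 1)
        = (qF a Q z * qPoch z Q N) * (1 - z * Q ^ N) := by rw [qPoch_succ]; ring
    _ = qPoch (a * z) Q N * ((1 - Q ^ N * z) * qF a Q (Q ^ N * z)) := by rw [ih]; ring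
    _ = qPoch (a * z) Q N * ((1 - a * (Q ^ N * z)) * qF a Q (Q * (Q ^ N * z))) := by rw [hfe]
    _ = qPoch (a * z) Q (N + 1) * qF a Q (Q ^ (N + 1) * z) := by
        rw [qPoch_succ, pow_succ]
        ring_nf

lemma qF_sub_one_norm (hQ : ‖Q‖ < 1) (a : ℂ) {B : ℝ} (hbd : ∀ n, ‖qC a Q n‖ ≤ B)
    {w : ℂ} (hw : ‖w‖ ≤ 1/2) : ‖qF a Q w - 1‖ ≤ 2 * B * ‖w‖ := by
  have hB0 : 0 ≤ B := le_trans (norm_nonneg _) (hbd 0)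
  have hw1 : ‖w‖ < 1 := lt_of_le_of_lt hw (by norm_num)
  have hS := qC_summable hQ a hw1
  have h0 : qF a Q w = 1 + ∑' n : ℕ, qC a Q (n + 1) * w ^ (n + 1) := by
    rw [qF, Summable.tsum_eq_zero_add hS, qC_zero]; simp
  rw [h0, add_sub_cancel_left]
  have hg : Summable (fun n : ℕ => B * (1/2 : ℝ) ^ n * ‖w‖) := by
    apply Summable.mul_right
    exact (summable_geometric_of_lt_one (by norm_num) (by norm_num)).mul_left B
  calc ‖∑' n : ℕ, qC a Q (n + 1) * w ^ (n + 1)‖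
      ≤ ∑' n : ℕ, ‖qC a Q (n + 1) * w ^ (n + 1)‖ :=
        norm_tsum_le_tsum_norm ((summable_nat_add_iff
          (f := fun n : ℕ => ‖qC a Q n * w ^ n‖) 1).mpr (qC_summable_norm hQ a hw1))
  _ ≤ ∑' n : ℕ, B * (1/2 : ℝ) ^ n * ‖w‖ := by
      apply Summable.tsum_le_tsum _ ((summable_nat_add_iff
        (f := fun n : ℕ => ‖qC a Q n * w ^ n‖) 1).mpr (qC_summable_norm hQ a hw1)) hg
      intro n
      rw [norm_mul, norm_pow, pow_succ]
      calc ‖qC a Q (n + 1)‖ * (‖w‖ ^ n * ‖w‖)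
          ≤ B * ((1/2 : ℝ) ^ n * ‖w‖) := by
            apply mul_le_mul (hbd _) _ (by positivity) hB0
            exact mul_le_mul_of_nonneg_right (pow_le_pow_left₀ (norm_nonneg _) hw n) (norm_nonneg _)
      _ = B * (1/2 : ℝ) ^ n * ‖w‖ := by ring
  _ = 2 * B * ‖w‖ := by
      have h2 : (∑' n : ℕ, (1/2 : ℝ) ^ n) = 2 := by
        rw [tsum_geometric_of_lt_one (by norm_num) (by norm_num)]; norm_num
      rw [tsum_mul_right, tsum_mul_left, h2]
      ring

lemma qF_tendsto_one (hQ : ‖Q‖ < 1) (a : ℂ) (hz : ‖z‖ < 1) :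
    Filter.Tendsto (fun N : ℕ => qF a Q (Q ^ N * z)) Filter.atTop (nhds 1) := by
  obtain ⟨B, hB, hbd⟩ := qC_bound hQ a
  have key : Filter.Tendsto (fun N : ℕ => qF a Q (Q ^ N * z) - 1) Filter.atTop (nhds 0) := by
    apply squeeze_zero_norm' (a := fun N : ℕ => 2 * B * (‖Q‖ ^ N * ‖z‖))
    · have htend : Filter.Tendsto (fun N : ℕ => ‖Q‖ ^ N * ‖z‖) Filter.atTop (nhds 0) := by
        simpa using (tendsto_pow_atTop_nhds_zero_of_lt_one (norm_nonneg _) hQ).mul_const ‖z‖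
      filter_upwards [htend.eventually_le_const (by norm_num : (0:ℝ) < 1/2)] with N hN
      have hw : ‖Q ^ N * z‖ ≤ 1/2 := by rw [norm_mul, norm_pow]; exact hN
      calc ‖qF a Q (Q ^ N * z) - 1‖ ≤ 2 * B * ‖Q ^ N * z‖ := qF_sub_one_norm hQ a hbd hw
      _ = 2 * B * (‖Q‖ ^ N * ‖z‖) := by rw [norm_mul, norm_pow]
    · simpa using ((tendsto_pow_atTop_nhds_zero_of_lt_one (norm_nonneg _) hQ).mul_const
        ‖z‖).const_mul (2 * B)
  have := key.add_const 1
  simpa using this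

lemma qF_mul (hQ : ‖Q‖ < 1) (ha : ‖a‖ < 1) (hz : ‖z‖ < 1) :
    qF a Q z * qPochInf z Q = qPochInf (a * z) Q := by
  have haz : ‖a * z‖ < 1 := by
    calc ‖a * z‖ = ‖a‖ * ‖z‖ := norm_mul _ _
    _ ≤ 1 * ‖z‖ := mul_le_mul_of_nonneg_right ha.le (norm_nonneg _)
    _ = ‖z‖ := one_mul _
    _ < 1 := hz
  have t1 : Filter.Tendsto (fun N : ℕ => qPoch z Q N) Filter.atTop (nhds (qPochInf z Q)) :=
    (multipliable_factor hz hQ).hasProd.tendsto_prod_nat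
  have t2 : Filter.Tendsto (fun N : ℕ => qPoch (a * z) Q N) Filter.atTop
      (nhds (qPochInf (a * z) Q)) :=
    (multipliable_factor haz hQ).hasProd.tendsto_prod_nat
  have t3 := qF_tendsto_one hQ a hz
  have hcomb : Filter.Tendsto (fun N : ℕ => qF a Q z * qPoch z Q N) Filter.atTop
      (nhds (qF a Q z * qPochInf z Q)) := tendsto_const_nhds.mul t1
  have hcomb2 : Filter.Tendsto (fun N : ℕ => qPoch (a * z) Q N * qF a Q (Q ^ N * z))
      Filter.atTop (nhds (qPochInf (a * z) Q * 1)) := t2.mul t3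
  have := tendsto_nhds_unique (hcomb.congr (fun N => qF_iterate hQ a hz N)) hcomb2
  simpa using this

lemma qF_eq (hQ : ‖Q‖ < 1) (ha : ‖a‖ < 1) (hz : ‖z‖ < 1) :
    qF a Q z = qPochInf (a * z) Q / qPochInf z Q := by
  rw [← qF_mul hQ ha hz, mul_div_assoc, div_self (qPochInf_ne_zero hz hQ), mul_one]

end D

section E
variable {q : ℂ}

lemma hQ_of_hq (hq : ‖q‖ < 1) : ‖q ^ 2‖ < 1 := by
  rw [norm_pow]
  exact pow_lt_one₀ (norm_nonneg _) hq (by norm_num)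

lemma inner_eval (hq : ‖q‖ < 1) (r : ℕ) :
    qF q (q ^ 2) (q * (q ^ 2) ^ r) =
      (qPochInf (q ^ 2) (q ^ 2) / qPochInf q (q ^ 2)) * qC q (q ^ 2) r := by
  have hQ := hQ_of_hq hq
  have hz : ‖q * (q ^ 2) ^ r‖ < 1 := norm_mul_pow_lt hq hQ r
  rw [qF_eq hQ hq hz]
  have e1 : q * (q * (q ^ 2) ^ r) = (q ^ 2) * (q ^ 2) ^ r := by ring
  rw [e1]
  have h1 : qPochInf ((q ^ 2) * (q ^ 2) ^ r) (q ^ 2) =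
      qPochInf (q ^ 2) (q ^ 2) / qPoch (q ^ 2) (q ^ 2) r :=
    (eq_div_iff (qPoch_ne_zero hQ hQ r)).mpr
      (by rw [qPochInf_shift hQ hQ r]; ring)
  have h2 : qPochInf (q * (q ^ 2) ^ r) (q ^ 2) =
      qPochInf q (q ^ 2) / qPoch q (q ^ 2) r :=
    (eq_div_iff (qPoch_ne_zero hq hQ r)).mpr
      (by rw [qPochInf_shift hq hQ r]; ring)
  rw [h1, h2, qC]
  have n1 : qPoch (q ^ 2) (q ^ 2) r ≠ 0 := qPoch_ne_zero hQ hQ r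
  have n2 : qPoch q (q ^ 2) r ≠ 0 := qPoch_ne_zero hq hQ r
  have n3 : qPochInf q (q ^ 2) ≠ 0 := qPochInf_ne_zero hq hQ
  field_simp

lemma qF_at_Qpow (hq : ‖q‖ < 1) (m : ℕ) :
    qF q (q ^ 2) ((q ^ 2) ^ (m + 1)) =
      (qPochInf q (q ^ 2) / qPoch q (q ^ 2) (m + 1)) /
        (qPochInf (q ^ 2) (q ^ 2) / qPoch (q ^ 2) (q ^ 2) m) := by
  have hQ := hQ_of_hq hq
  have hz : ‖(q ^ 2) ^ (m + 1)‖ < 1 := by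
    rw [norm_pow]
    exact pow_lt_one₀ (norm_nonneg _) hQ (by norm_num)
  rw [qF_eq hQ hq hz]
  have h1 : qPochInf (q * (q ^ 2) ^ (m + 1)) (q ^ 2) =
      qPochInf q (q ^ 2) / qPoch q (q ^ 2) (m + 1) :=
    (eq_div_iff (qPoch_ne_zero hq hQ (m + 1))).mpr
      (by rw [qPochInf_shift hq hQ (m + 1)]; ring)
  have h2 : qPochInf ((q ^ 2) ^ (m + 1)) (q ^ 2) =
      qPochInf (q ^ 2) (q ^ 2) / qPoch (q ^ 2) (q ^ 2) m := by
    apply (eq_div_iff (qPoch_ne_zero hQ hQ m)).mpr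
    have e : ((q ^ 2) : ℂ) ^ (m + 1) = (q ^ 2) * (q ^ 2) ^ m := by ring
    rw [e, qPochInf_shift hQ hQ m]; ring
  rw [h1, h2]

lemma T_eval (hq : ‖q‖ < 1) (m : ℕ) :
    (∑' j : ℕ, qC q (q ^ 2) j * q ^ j * (1 - (q ^ 2) ^ (m + j + 1))⁻¹)
      = qPoch (q ^ 2) (q ^ 2) m / qPoch q (q ^ 2) (m + 1) := by
  have hQ := hQ_of_hq hq
  obtain ⟨B, hB, hbd⟩ := qC_bound hQ q
  -- the double-sum function
  set H : ℕ × ℕ → ℂ := fun p => qC q (q ^ 2) p.1 * q ^ p.1 * (q ^ 2) ^ ((m + p.1 + 1) * p.2)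
    with hH_def
  have hQ2 : ‖q‖ ^ 2 < 1 := by rwa [norm_pow] at hQ
  have hHs : Summable H := by
    apply Summable.of_norm_bounded
      (g := fun p : ℕ × ℕ => B * (‖q‖ ^ p.1 * (‖q‖ ^ 2) ^ p.2))
    · exact (((summable_geometric_of_lt_one (norm_nonneg _) hq).mul_of_nonneg
        (summable_geometric_of_lt_one (by positivity) hQ2)
        (fun _ => pow_nonneg (norm_nonneg _) _)
        (fun _ => pow_nonneg (by positivity) _))).mul_left B
    · rintro ⟨j, r⟩
      rw [hH_def]
      simp only [norm_mul, norm_pow]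
      have b1 : ‖qC q (q ^ 2) j‖ ≤ B := hbd j
      have b2 : (‖q‖ ^ 2) ^ ((m + j + 1) * r) ≤ (‖q‖ ^ 2) ^ r :=
        pow_le_pow_of_le_one (by positivity) hQ2.le
          (Nat.le_mul_of_pos_left r (by omega))
      calc ‖qC q (q ^ 2) j‖ * ‖q‖ ^ j * (‖q‖ ^ 2) ^ ((m + j + 1) * r)
          ≤ B * ‖q‖ ^ j * (‖q‖ ^ 2) ^ r := by
            apply mul_le_mul _ b2 (pow_nonneg (by positivity) _) (by positivity)
            exact mul_le_mul_of_nonneg_right b1 (pow_nonneg (norm_nonneg _) _)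
      _ = B * (‖q‖ ^ j * (‖q‖ ^ 2) ^ r) := by ring
  have hfib1 : ∀ j : ℕ, Summable (fun r : ℕ => H (j, r)) := fun j => hHs.prod_factor j
  have hfib2 : ∀ r : ℕ, Summable (fun j : ℕ => H (j, r)) := fun r =>
    (hHs.prod_symm).prod_factor r
  -- step 1: rewrite each term as an r-sum
  have step1 : (∑' j : ℕ, qC q (q ^ 2) j * q ^ j * (1 - (q ^ 2) ^ (m + j + 1))⁻¹)
      = ∑' j : ℕ, ∑' r : ℕ, H (j, r) := by
    apply tsum_congr
    intro j
    have hnorm : ‖((q ^ 2) : ℂ) ^ (m + j + 1)‖ < 1 := by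
      rw [norm_pow]
      exact pow_lt_one₀ (norm_nonneg _) hQ (by omega)
    rw [← tsum_geometric_of_norm_lt_one hnorm, ← tsum_mul_left]
    apply tsum_congr
    intro r
    rw [hH_def]
    simp only
    rw [← pow_mul]
  -- step 2: swap
  have step2 : (∑' j : ℕ, ∑' r : ℕ, H (j, r)) = ∑' r : ℕ, ∑' j : ℕ, H (j, r) := by
    exact (Summable.tsum_comm' (f := fun j r => H (j, r)) hHs hfib1 hfib2).symm
  -- step 3: evaluate inner j-sum
  have step3 : ∀ r : ℕ, (∑' j : ℕ, H (j, r))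
      = (qPochInf (q ^ 2) (q ^ 2) / qPochInf q (q ^ 2)) *
          (qC q (q ^ 2) r * ((q ^ 2) ^ (m + 1)) ^ r) := by
    intro r
    have e1 : ∀ j : ℕ, H (j, r)
        = ((q ^ 2) ^ ((m + 1) * r)) * (qC q (q ^ 2) j * (q * (q ^ 2) ^ r) ^ j) := by
      intro j
      rw [hH_def]
      simp only
      have : (m + j + 1) * r = (m + 1) * r + r * j := by ring
      rw [this, pow_add, mul_pow, pow_mul]
      ring
    calc (∑' j : ℕ, H (j, r))
        = ((q ^ 2) ^ ((m + 1) * r)) * ∑' j : ℕ, qC q (q ^ 2) j * (q * (q ^ 2) ^ r) ^ j := by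
          rw [← tsum_mul_left]; exact tsum_congr e1
    _ = ((q ^ 2) ^ ((m + 1) * r)) * qF q (q ^ 2) (q * (q ^ 2) ^ r) := rfl
    _ = ((q ^ 2) ^ ((m + 1) * r)) *
          ((qPochInf (q ^ 2) (q ^ 2) / qPochInf q (q ^ 2)) * qC q (q ^ 2) r) := by
          rw [inner_eval hq r]
    _ = (qPochInf (q ^ 2) (q ^ 2) / qPochInf q (q ^ 2)) *
          (qC q (q ^ 2) r * ((q ^ 2) ^ (m + 1)) ^ r) := by
          rw [← pow_mul]
          ring
  -- step 4: sum over r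
  rw [step1, step2]
  calc (∑' r : ℕ, ∑' j : ℕ, H (j, r))
      = ∑' r : ℕ, (qPochInf (q ^ 2) (q ^ 2) / qPochInf q (q ^ 2)) *
          (qC q (q ^ 2) r * ((q ^ 2) ^ (m + 1)) ^ r) := tsum_congr step3
  _ = (qPochInf (q ^ 2) (q ^ 2) / qPochInf q (q ^ 2)) * qF q (q ^ 2) ((q ^ 2) ^ (m + 1)) := by
      rw [tsum_mul_left]; rfl
  _ = qPoch (q ^ 2) (q ^ 2) m / qPoch q (q ^ 2) (m + 1) := by
      rw [qF_at_Qpow hq m]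
      have n1 : qPochInf q (q ^ 2) ≠ 0 := qPochInf_ne_zero hq hQ
      have n2 : qPochInf (q ^ 2) (q ^ 2) ≠ 0 := qPochInf_ne_zero hQ hQ
      have n3 : qPoch q (q ^ 2) (m + 1) ≠ 0 := qPoch_ne_zero hq hQ (m + 1)
      have n4 : qPoch (q ^ 2) (q ^ 2) m ≠ 0 := qPoch_ne_zero hQ hQ m
      field_simp

end E

noncomputable def Gfun (k : ℕ) (q : ℂ) (n : ℕ) (p : ℕ × ℕ) : ℂ :=
  qC (q ^ (2 * k - 1)) (q ^ 2) p.1 * qC q (q ^ 2) p.2 * q ^ ((2 * n + 1) * (p.1 + p.2 + 1))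

noncomputable def Kfun (k : ℕ) (q : ℂ) (p : ℕ × ℕ) : ℂ :=
  qC (q ^ (2 * k - 1)) (q ^ 2) p.1 * qC q (q ^ 2) p.2 *
    (q ^ (p.1 + p.2 + 1) * (1 - (q ^ 2) ^ (p.1 + p.2 + 1))⁻¹)

/-- For `k ≥ 1`, `F_{k,1}(q) = Σ_{n≥0} (q^{2k-1};q^2)_n q^{n+1} / (q;q^2)_{n+1}`. -/
theorem stmt1 (k : ℕ) (hk : 1 ≤ k) (q : ℂ) (hq : ‖q‖ < 1) :
    (∑' n : ℕ, qPochInf (q ^ (2 * n + 2)) (q ^ 2) * qPochInf (q ^ (2 * n + 2 * k)) (q ^ 2) /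
        (qPochInf (q ^ (2 * n + 1)) (q ^ 2)) ^ 2 * q ^ (2 * n + 1)) =
      ∑' n : ℕ, qPoch (q ^ (2 * k - 1)) (q ^ 2) n * q ^ (n + 1) / qPoch q (q ^ 2) (n + 1) := by
  have hQ : ‖q ^ 2‖ < 1 := hQ_of_hq hq
  have ha : ‖q ^ (2 * k - 1)‖ < 1 := by
    rw [norm_pow]; exact pow_lt_one₀ (norm_nonneg _) hq (by omega)
  have hzn : ∀ n : ℕ, ‖q ^ (2 * n + 1)‖ < 1 := fun n => by
    rw [norm_pow]; exact pow_lt_one₀ (norm_nonneg _) hq (by omega)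
  obtain ⟨Ba, hBa, hbda⟩ := qC_bound hQ (q ^ (2 * k - 1))
  obtain ⟨Bq, hBq, hbdq⟩ := qC_bound hQ q
  -- joint summability of Gfun
  have hGb : ∀ (n : ℕ) (p : ℕ × ℕ),
      ‖Gfun k q n p‖ ≤ Ba * Bq * (‖q‖ ^ n * (‖q‖ ^ p.1 * ‖q‖ ^ p.2)) := by
    rintro n ⟨p1, p2⟩
    rw [Gfun]
    simp only [norm_mul, norm_pow]
    have hexp : ‖q‖ ^ ((2 * n + 1) * (p1 + p2 + 1)) ≤ ‖q‖ ^ (n + p1 + p2) := by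
      apply pow_le_pow_of_le_one (norm_nonneg _) hq.le
      nlinarith
    calc ‖qC (q ^ (2 * k - 1)) (q ^ 2) p1‖ * ‖qC q (q ^ 2) p2‖ *
            ‖q‖ ^ ((2 * n + 1) * (p1 + p2 + 1))
        ≤ Ba * Bq * ‖q‖ ^ (n + p1 + p2) := by
          apply mul_le_mul _ hexp (by positivity) (by positivity)
          exact mul_le_mul (hbda p1) (hbdq p2) (norm_nonneg _) (le_of_lt hBa)
    _ = Ba * Bq * (‖q‖ ^ n * (‖q‖ ^ p1 * ‖q‖ ^ p2)) := by rw [pow_add, pow_add]; ring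
  have hgeo : Summable (fun x : ℕ × (ℕ × ℕ) =>
      Ba * Bq * (‖q‖ ^ x.1 * (‖q‖ ^ x.2.1 * ‖q‖ ^ x.2.2))) := by
    apply Summable.mul_left
    apply Summable.mul_of_nonneg (summable_geometric_of_lt_one (norm_nonneg _) hq)
      ((summable_geometric_of_lt_one (norm_nonneg _) hq).mul_of_nonneg
        (summable_geometric_of_lt_one (norm_nonneg _) hq)
        (fun _ => pow_nonneg (norm_nonneg _) _) (fun _ => pow_nonneg (norm_nonneg _) _))
      (fun _ => pow_nonneg (norm_nonneg _) _)
    intro p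
    positivity
  have hGs : Summable (fun x : ℕ × (ℕ × ℕ) => Gfun k q x.1 x.2) :=
    Summable.of_norm_bounded hgeo (fun x => hGb x.1 x.2)
  have hGs' : Summable (fun y : (ℕ × ℕ) × ℕ => Gfun k q y.2 y.1) := hGs.prod_symm
  -- summability of Kfun
  have hKs : Summable (Kfun k q) := by
    have hQ2 : ‖q‖ ^ 2 < 1 := by rwa [norm_pow] at hQ
    have h1Q : (0:ℝ) < 1 - ‖q‖ ^ 2 := by linarith
    apply Summable.of_norm_bounded
      (g := fun p : ℕ × ℕ => Ba * Bq * (1 - ‖q‖ ^ 2)⁻¹ * (‖q‖ ^ p.1 * ‖q‖ ^ p.2))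
    · apply Summable.mul_left
      apply Summable.mul_of_nonneg (summable_geometric_of_lt_one (norm_nonneg _) hq)
        (summable_geometric_of_lt_one (norm_nonneg _) hq)
        (fun _ => pow_nonneg (norm_nonneg _) _) (fun _ => pow_nonneg (norm_nonneg _) _)
    · rintro ⟨p1, p2⟩
      rw [Kfun]
      simp only [norm_mul, norm_pow, norm_inv]
      have hinv : ‖(1 : ℂ) - (q ^ 2) ^ (p1 + p2 + 1)‖⁻¹ ≤ (1 - ‖q‖ ^ 2)⁻¹ := by
        apply inv_anti₀ h1Q
        have h1 : ‖((q ^ 2) : ℂ) ^ (p1 + p2 + 1)‖ ≤ ‖q‖ ^ 2 := by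
          rw [norm_pow, norm_pow]
          exact pow_le_of_le_one (by positivity) hQ2.le (by omega)
        have := norm_sub_norm_le (1 : ℂ) ((q ^ 2) ^ (p1 + p2 + 1))
        rw [norm_one] at this
        linarith
      have hqpow : ‖q‖ ^ (p1 + p2 + 1) ≤ ‖q‖ ^ (p1 + p2) :=
        pow_le_pow_of_le_one (norm_nonneg _) hq.le (by omega)
      calc ‖qC (q ^ (2 * k - 1)) (q ^ 2) p1‖ * ‖qC q (q ^ 2) p2‖ *
              (‖q‖ ^ (p1 + p2 + 1) * ‖(1 : ℂ) - (q ^ 2) ^ (p1 + p2 + 1)‖⁻¹)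
          ≤ Ba * Bq * (‖q‖ ^ (p1 + p2) * (1 - ‖q‖ ^ 2)⁻¹) := by
            apply mul_le_mul _ _ (by positivity) (by positivity)
            · exact mul_le_mul (hbda p1) (hbdq p2) (norm_nonneg _) (le_of_lt hBa)
            · exact mul_le_mul hqpow hinv (by positivity) (by positivity)
      _ = Ba * Bq * (1 - ‖q‖ ^ 2)⁻¹ * (‖q‖ ^ p1 * ‖q‖ ^ p2) := by rw [pow_add]; ring
  -- main calculation
  calc (∑' n : ℕ, qPochInf (q ^ (2 * n + 2)) (q ^ 2) * qPochInf (q ^ (2 * n + 2 * k)) (q ^ 2) /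
        (qPochInf (q ^ (2 * n + 1)) (q ^ 2)) ^ 2 * q ^ (2 * n + 1))
      = ∑' n : ℕ, ∑' p : ℕ × ℕ, Gfun k q n p := by
        apply tsum_congr
        intro n
        have e1 : q ^ (2 * n + 2) = q * q ^ (2 * n + 1) := by
          rw [← pow_succ']
        have e2 : q ^ (2 * n + 2 * k) = q ^ (2 * k - 1) * q ^ (2 * n + 1) := by
          rw [← pow_add]; congr 1; omega
        have m1 := qF_mul hQ hq (hzn n)
        have m2 := qF_mul hQ ha (hzn n)
        have nz := qPochInf_ne_zero (hzn n) hQ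
        have hAB : qPochInf (q ^ (2 * n + 2)) (q ^ 2) * qPochInf (q ^ (2 * n + 2 * k)) (q ^ 2) /
            (qPochInf (q ^ (2 * n + 1)) (q ^ 2)) ^ 2 * q ^ (2 * n + 1)
            = (qF (q ^ (2 * k - 1)) (q ^ 2) (q ^ (2 * n + 1)) *
                qF q (q ^ 2) (q ^ (2 * n + 1))) * q ^ (2 * n + 1) := by
          rw [e1, e2, ← m1, ← m2]
          field_simp
        rw [hAB, qF, qF,
          tsum_mul_tsum_of_summable_norm (qC_summable_norm hQ (q ^ (2 * k - 1)) (hzn n))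
            (qC_summable_norm hQ q (hzn n)), ← tsum_mul_right]
        apply tsum_congr
        rintro ⟨p1, p2⟩
        show qC (q ^ (2 * k - 1)) (q ^ 2) p1 * (q ^ (2 * n + 1)) ^ p1 *
            (qC q (q ^ 2) p2 * (q ^ (2 * n + 1)) ^ p2) * q ^ (2 * n + 1) = Gfun k q n (p1, p2)
        rw [Gfun]
        simp only
        have e3 : q ^ ((2 * n + 1) * (p1 + p2 + 1))
            = q ^ ((2 * n + 1) * p1) * q ^ ((2 * n + 1) * p2) * q ^ (2 * n + 1) := by
          rw [← pow_add, ← pow_add]; congr 1; ring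
        rw [e3, ← pow_mul, ← pow_mul]
        ring
  _ = ∑' x : ℕ × (ℕ × ℕ), Gfun k q x.1 x.2 :=
      (Summable.tsum_prod' hGs (fun b => hGs.prod_factor b)).symm
  _ = ∑' y : (ℕ × ℕ) × ℕ, Gfun k q y.2 y.1 := by
      rw [← Equiv.tsum_eq (Equiv.prodComm (ℕ × ℕ) ℕ)
        (fun x : ℕ × (ℕ × ℕ) => Gfun k q x.1 x.2)]
      rfl
  _ = ∑' p : ℕ × ℕ, ∑' n : ℕ, Gfun k q n p :=
      Summable.tsum_prod' hGs' (fun b => hGs'.prod_factor b)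
  _ = ∑' p : ℕ × ℕ, Kfun k q p := by
      apply tsum_congr
      rintro ⟨p1, p2⟩
      have hr : ‖((q ^ 2) : ℂ) ^ (p1 + p2 + 1)‖ < 1 := by
        rw [norm_pow]
        exact pow_lt_one₀ (norm_nonneg _) hQ (by omega)
      have e4 : ∀ n : ℕ, Gfun k q n (p1, p2)
          = (qC (q ^ (2 * k - 1)) (q ^ 2) p1 * qC q (q ^ 2) p2 * q ^ (p1 + p2 + 1)) *
              (((q ^ 2) ^ (p1 + p2 + 1)) ^ n) := by
        intro n
        rw [Gfun]
        simp only
        have e5 : q ^ ((2 * n + 1) * (p1 + p2 + 1))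
            = q ^ (p1 + p2 + 1) * (((q ^ 2) ^ (p1 + p2 + 1)) ^ n) := by
          rw [← pow_mul, ← pow_mul, ← pow_add]; congr 1; ring
        rw [e5]; ring
      calc (∑' n : ℕ, Gfun k q n (p1, p2))
          = ∑' n : ℕ, (qC (q ^ (2 * k - 1)) (q ^ 2) p1 * qC q (q ^ 2) p2 * q ^ (p1 + p2 + 1)) *
              (((q ^ 2) ^ (p1 + p2 + 1)) ^ n) := tsum_congr e4
      _ = (qC (q ^ (2 * k - 1)) (q ^ 2) p1 * qC q (q ^ 2) p2 * q ^ (p1 + p2 + 1)) *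
            (1 - (q ^ 2) ^ (p1 + p2 + 1))⁻¹ := by
          rw [tsum_mul_left, tsum_geometric_of_norm_lt_one hr]
      _ = Kfun k q (p1, p2) := by rw [Kfun]; ring
  _ = ∑' m : ℕ, ∑' j : ℕ, Kfun k q (m, j) :=
      Summable.tsum_prod' hKs (fun b => hKs.prod_factor b)
  _ = ∑' n : ℕ, qPoch (q ^ (2 * k - 1)) (q ^ 2) n * q ^ (n + 1) / qPoch q (q ^ 2) (n + 1) := by
      apply tsum_congr
      intro m
      have e6 : ∀ j : ℕ, Kfun k q (m, j)
          = (qC (q ^ (2 * k - 1)) (q ^ 2) m * q ^ (m + 1)) *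
              (qC q (q ^ 2) j * q ^ j * (1 - (q ^ 2) ^ (m + j + 1))⁻¹) := by
        intro j
        rw [Kfun]
        simp only
        have e7 : q ^ (m + j + 1) = q ^ (m + 1) * q ^ j := by
          rw [← pow_add]; congr 1; ring
        rw [e7]; ring
      calc (∑' j : ℕ, Kfun k q (m, j))
          = ∑' j : ℕ, (qC (q ^ (2 * k - 1)) (q ^ 2) m * q ^ (m + 1)) *
              (qC q (q ^ 2) j * q ^ j * (1 - (q ^ 2) ^ (m + j + 1))⁻¹) := tsum_congr e6
      _ = (qC (q ^ (2 * k - 1)) (q ^ 2) m * q ^ (m + 1)) *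
            (qPoch (q ^ 2) (q ^ 2) m / qPoch q (q ^ 2) (m + 1)) := by
          rw [tsum_mul_left, T_eval hq m]
      _ = qPoch (q ^ (2 * k - 1)) (q ^ 2) m * q ^ (m + 1) / qPoch q (q ^ 2) (m + 1) := by
          rw [qC]
          have n1 : qPoch (q ^ 2) (q ^ 2) m ≠ 0 := qPoch_ne_zero hQ hQ m
          have n2 : qPoch q (q ^ 2) (m + 1) ≠ 0 := qPoch_ne_zero hq hQ (m + 1)
          field_simp
end

section
/- For every positive integer k and every integer m with 1 ≤ m ≤ 2k, the coefficient of q^m in q·ω(q) − F_{k,1}(q) equals 0, where ω(q) := Σ_{n≥0} q^{2n(n+1)} / (q;q^2)_{n+1}^2 and F_{k,1}(q) := Σ_{n≥0} (q^{2k-1};q^2)_n · q^{n+1} / (q;q^2)_{n+1}. -/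
open Finset

/-- Ramanujan's third order mock theta function `ω(q)`. -/
noncomputable def omegaMock (q : ℂ) : ℂ :=
  ∑' n : ℕ, q ^ (2 * n * (n + 1)) / (qPoch q (q ^ 2) (n + 1)) ^ 2

/-- `F_{k,1}(q) = Σ_{n≥0} (q^{2k-1};q^2)_n q^{n+1} / (q;q^2)_{n+1}`. -/
noncomputable def F (k : ℕ) (q : ℂ) : ℂ :=
  ∑' n : ℕ, qPoch (q ^ (2 * k - 1)) (q ^ 2) n * q ^ (n + 1) / qPoch q (q ^ 2) (n + 1)


/-- Real shifted q-Pochhammer: `∏_{i<n} (1 - t^(e+2i))`. -/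
noncomputable def Rr (t : ℝ) (e n : ℕ) : ℝ := ∏ i ∈ Finset.range n, (1 - t ^ (e + 2 * i))

lemma Rr_succ (t : ℝ) (e n : ℕ) : Rr t e (n+1) = Rr t e n * (1 - t ^ (e + 2*n)) := by
  simp [Rr, Finset.prod_range_succ]

lemma Rr_succ' (t : ℝ) (e n : ℕ) : Rr t e (n+1) = (1 - t ^ e) * Rr t (e+2) n := by
  have h : ∀ x : ℕ, e + 2*(x+1) = (e+2) + 2*x := fun x => by ring
  rw [Rr, Finset.prod_range_succ']
  simp only [h, Nat.mul_zero, Nat.add_zero]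
  rw [mul_comm, Rr]

/-- Weierstrass-type bound. -/
lemma prod_one_sub_ge (n : ℕ) (x : ℕ → ℝ) (h0 : ∀ i, 0 ≤ x i) (h1 : ∀ i, x i ≤ 1) :
    1 - ∑ i ∈ range n, x i ≤ ∏ i ∈ range n, (1 - x i) := by
  induction n with
  | zero => simp
  | succ n ih =>
    rw [Finset.prod_range_succ, Finset.sum_range_succ]
    have hp : 0 ≤ ∏ i ∈ range n, (1 - x i) :=
      Finset.prod_nonneg fun i _ => by linarith [h1 i]
    have hple : ∏ i ∈ range n, (1 - x i) ≤ 1 :=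
      Finset.prod_le_one (fun i _ => by linarith [h1 i]) (fun i _ => by linarith [h0 i])
    nlinarith [h0 n, h1 n]

section Bounds
variable {t : ℝ} (ht0 : 0 ≤ t) (ht : t ≤ 1/2)
include ht0 ht

lemma pow_le_geo (e i : ℕ) (he : 1 ≤ e) : t ^ (e + 2*i) ≤ t^e * (1/4)^i := by
  rw [pow_add, pow_mul]
  have : t^2 ≤ 1/4 := by nlinarith
  exact mul_le_mul_of_nonneg_left (pow_le_pow_left₀ (by positivity) this i) (by positivity)

lemma sum_pow_le (e n : ℕ) (he : 1 ≤ e) : ∑ i ∈ range n, t ^ (e + 2*i) ≤ (4/3) * t^e := by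
  calc ∑ i ∈ range n, t ^ (e + 2*i) ≤ ∑ i ∈ range n, t^e * (1/4)^i :=
        Finset.sum_le_sum fun i _ => pow_le_geo ht0 ht e i he
    _ = t^e * ∑ i ∈ range n, (1/4)^i := by rw [Finset.mul_sum]
    _ ≤ t^e * (4/3) := by
        refine mul_le_mul_of_nonneg_left ?_ (by positivity)
        have := Summable.sum_le_tsum (range n) (fun i _ => by positivity)
          (summable_geometric_of_lt_one (by norm_num) (by norm_num : (1/4:ℝ) < 1))
        rw [tsum_geometric_of_lt_one (by norm_num) (by norm_num)] at this
        linarith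
    _ ≤ (4/3) * t^e := by nlinarith [pow_nonneg ht0 e]

lemma te_le (e : ℕ) (he : 1 ≤ e) : t^e ≤ 1/2 :=
  calc t^e ≤ t^1 := pow_le_pow_of_le_one ht0 (by linarith) he
  _ = t := pow_one t
  _ ≤ 1/2 := ht

lemma one_sub_Rr_le (e n : ℕ) (he : 1 ≤ e) : 1 - Rr t e n ≤ (4/3) * t^e := by
  have h := prod_one_sub_ge n (fun i => t ^ (e + 2*i)) (fun i => by positivity)
    (fun i => le_trans (te_le ht0 ht _ (by omega)) (by norm_num))
  have := sum_pow_le ht0 ht e n he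
  simp only [Rr]; linarith

lemma Rr_le_one (e n : ℕ) (he : 1 ≤ e) : Rr t e n ≤ 1 :=
  Finset.prod_le_one (fun i _ => by
      have := te_le ht0 ht (e+2*i) (by omega); linarith)
    (fun i _ => by have := pow_nonneg ht0 (e+2*i); linarith)

lemma Rr_ge (e n : ℕ) (he : 1 ≤ e) : 1/3 ≤ Rr t e n := by
  have h1 := one_sub_Rr_le ht0 ht e n he
  have h2 := te_le ht0 ht e he
  linarith

lemma Rr_pos (e n : ℕ) (he : 1 ≤ e) : 0 < Rr t e n := lt_of_lt_of_le (by norm_num) (Rr_ge ht0 ht e n he)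

end Bounds

noncomputable def termA (t : ℝ) (j n : ℕ) : ℝ := t^n / Rr t (2*j+3) n
noncomputable def termB (t : ℝ) (j n : ℕ) : ℝ :=
  t^(2*n^2+2*n*(j+1)) / (Rr t (2*j+3) n * Rr t 1 (n+1))
noncomputable def tv (t : ℝ) (j n : ℕ) : ℝ :=
  t^(2*n^2+2*n*(j+1)) / (Rr t (2*j+3) n * Rr t 1 n)
noncomputable def SA (t : ℝ) (j : ℕ) : ℝ := ∑' n, termA t j n
noncomputable def SB (t : ℝ) (j : ℕ) : ℝ := ∑' n, termB t j n

lemma div_le_C_mul (a b C : ℝ) (ha : 0 ≤ a) (hC : 0 < C) (hb : 1/C ≤ b) : a / b ≤ C * a := by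
  have hb0 : 0 < b := lt_of_lt_of_le (by positivity) hb
  rw [div_le_iff₀ hb0]
  have h1 : 1 ≤ C * b := by
    have := (div_le_iff₀ hC).mp (le_refl (1/C))
    calc (1:ℝ) = (1/C) * C := by field_simp
    _ ≤ b * C := by exact mul_le_mul_of_nonneg_right hb hC.le
    _ = C * b := mul_comm _ _
  nlinarith

section
variable {t : ℝ} (ht0 : 0 ≤ t) (ht : t ≤ 1/2)
include ht0 ht

lemma tn_le (n : ℕ) : t^n ≤ (1/2)^n := pow_le_pow_left₀ ht0 ht n

lemma termA_nonneg (j n : ℕ) : 0 ≤ termA t j n :=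
  div_nonneg (by positivity) (Rr_pos ht0 ht _ n (by omega)).le

lemma termA_le (j n : ℕ) : termA t j n ≤ 3 * (1/2)^n := by
  calc termA t j n ≤ 3 * t^n :=
        div_le_C_mul _ _ 3 (by positivity) (by norm_num) (Rr_ge ht0 ht _ n (by omega))
  _ ≤ 3 * (1/2)^n := by have := tn_le ht0 ht n; linarith

lemma termB_nonneg (j n : ℕ) : 0 ≤ termB t j n :=
  div_nonneg (by positivity)
    (mul_nonneg (Rr_pos ht0 ht _ n (by omega)).le (Rr_pos ht0 ht _ (n+1) (by omega)).le)

lemma prodRr_ge (j n m : ℕ) : 1/9 ≤ Rr t (2*j+3) n * Rr t 1 m := by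
  have h1 := Rr_ge ht0 ht (2*j+3) n (by omega)
  have h2 := Rr_ge ht0 ht 1 m (by omega)
  nlinarith

lemma pow_big_le (n E : ℕ) (h : n ≤ E) : t^E ≤ (1/2)^n :=
  le_trans (pow_le_pow_of_le_one ht0 (by linarith) h) (tn_le ht0 ht n)

lemma termB_le (j n : ℕ) : termB t j n ≤ 9 * (1/2)^n := by
  calc termB t j n ≤ 9 * t^(2*n^2+2*n*(j+1)) :=
        div_le_C_mul _ _ 9 (by positivity) (by norm_num) (prodRr_ge ht0 ht j n (n+1))
  _ ≤ 9 * (1/2)^n := by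
      have := pow_big_le ht0 ht n (2*n^2+2*n*(j+1)) (by nlinarith)
      have h0 : (0:ℝ) ≤ t^(2*n^2+2*n*(j+1)) := by positivity
      nlinarith

lemma tv_nonneg (j n : ℕ) : 0 ≤ tv t j n :=
  div_nonneg (by positivity)
    (mul_nonneg (Rr_pos ht0 ht _ n (by omega)).le (Rr_pos ht0 ht _ n (by omega)).le)

lemma tv_le (j n : ℕ) : tv t j n ≤ 9 * (1/2)^n := by
  calc tv t j n ≤ 9 * t^(2*n^2+2*n*(j+1)) :=
        div_le_C_mul _ _ 9 (by positivity) (by norm_num) (prodRr_ge ht0 ht j n n)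
  _ ≤ 9 * (1/2)^n := by
      have := pow_big_le ht0 ht n (2*n^2+2*n*(j+1)) (by nlinarith)
      have h0 : (0:ℝ) ≤ t^(2*n^2+2*n*(j+1)) := by positivity
      nlinarith

omit ht0 ht in
lemma geo_summable : Summable (fun n : ℕ => (1/2:ℝ)^n) :=
  summable_geometric_of_lt_one (by norm_num) (by norm_num)

lemma sumA (j : ℕ) : Summable (fun n => termA t j n) :=
  Summable.of_nonneg_of_le (termA_nonneg ht0 ht j) (termA_le ht0 ht j) (geo_summable.mul_left 3)

lemma sumB (j : ℕ) : Summable (fun n => termB t j n) :=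
  Summable.of_nonneg_of_le (termB_nonneg ht0 ht j) (termB_le ht0 ht j) (geo_summable.mul_left 9)

lemma sumtv (j : ℕ) : Summable (fun n => tv t j n) :=
  Summable.of_nonneg_of_le (tv_nonneg ht0 ht j) (tv_le ht0 ht j) (geo_summable.mul_left 9)

lemma beta_le (j : ℕ) : t^(2*j+3) ≤ 1/8 := by
  calc t^(2*j+3) ≤ (1/2)^(2*j+3) := tn_le ht0 ht _
  _ ≤ (1/2)^3 := pow_le_pow_of_le_one (by norm_num) (by norm_num) (by omega)
  _ = 1/8 := by norm_num

lemma beta_pos (j : ℕ) : 0 < 1 - t^(2*j+3) := by have := beta_le ht0 ht j; linarith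

lemma recA (j : ℕ) : SA t j = 1 + (t/(1-t^(2*j+3))) * SA t (j+1) := by
  have h0 : termA t j 0 = 1 := by simp [termA, Rr]
  rw [SA, Summable.tsum_eq_zero_add (sumA ht0 ht j), h0]
  congr 1
  have hterm : ∀ n : ℕ, termA t j (n+1) = (t/(1-t^(2*j+3))) * termA t (j+1) n := by
    intro n
    have e1 : 2*(j+1)+3 = (2*j+3)+2 := by ring
    rw [termA, termA, e1, Rr_succ' t (2*j+3) n]
    have hY := Rr_pos ht0 ht ((2*j+3)+2) n (by omega)
    have hβ := beta_pos ht0 ht j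
    field_simp
    ring
  rw [tsum_congr hterm, tsum_mul_left]
  rfl

lemma termB_eq (j n : ℕ) : termB t j n =
    (tv t j n - tv t j (n+1)) + (t/(1-t^(2*j+3))) * termB t (j+1) n := by
  have e1 : 2*(j+1)+3 = (2*j+3)+2 := by ring
  have key : (1 - t^(2*j+3)) * Rr t ((2*j+3)+2) n = Rr t (2*j+3) n * (1 - t^((2*j+3)+2*n)) := by
    rw [← Rr_succ', Rr_succ]
  simp only [termB, tv, e1]
  rw [Rr_succ t (2*j+3) n, Rr_succ t 1 n]
  have hX := Rr_pos ht0 ht (2*j+3) n (by omega)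
  have hP := Rr_pos ht0 ht 1 n (by omega)
  have hY := Rr_pos ht0 ht ((2*j+3)+2) n (by omega)
  have hb1 : 0 < 1 - t^((2*j+3)+2*n) := by
    have := te_le ht0 ht ((2*j+3)+2*n) (by omega); linarith
  have hb2 : 0 < 1 - t^(1+2*n) := by
    have := te_le ht0 ht (1+2*n) (by omega); linarith
  have hβ := beta_pos ht0 ht j
  have hYv : Rr t ((2*j+3)+2) n = Rr t (2*j+3) n * (1 - t^((2*j+3)+2*n)) / (1 - t^(2*j+3)) := by
    rw [eq_div_iff hβ.ne']
    linear_combination key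
  rw [hYv]
  field_simp
  ring

lemma recB (j : ℕ) : SB t j = 1 + (t/(1-t^(2*j+3))) * SB t (j+1) := by
  have hsub : Summable (fun n => tv t j n - tv t j (n+1)) :=
    (sumtv ht0 ht j).sub ((summable_nat_add_iff 1).mpr (sumtv ht0 ht j))
  have h1 : ∑' n, (tv t j n - tv t j (n+1)) = 1 := by
    rw [Summable.tsum_sub (sumtv ht0 ht j) ((summable_nat_add_iff 1).mpr (sumtv ht0 ht j))]
    have := Summable.tsum_eq_zero_add (sumtv ht0 ht j)
    have h0 : tv t j 0 = 1 := by simp [tv, Rr]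
    rw [this, h0]; ring
  calc SB t j = ∑' n, ((tv t j n - tv t j (n+1)) + (t/(1-t^(2*j+3))) * termB t (j+1) n) :=
        tsum_congr (termB_eq ht0 ht j)
  _ = (∑' n, (tv t j n - tv t j (n+1))) + ∑' n, (t/(1-t^(2*j+3))) * termB t (j+1) n :=
        Summable.tsum_add hsub ((sumB ht0 ht (j+1)).mul_left _)
  _ = 1 + (t/(1-t^(2*j+3))) * SB t (j+1) := by rw [h1, tsum_mul_left]; rfl

lemma SA_le (j : ℕ) : SA t j ≤ 6 := by
  have h := Summable.tsum_le_tsum (termA_le ht0 ht j) (sumA ht0 ht j) (geo_summable.mul_left 3)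
  rw [tsum_mul_left, tsum_geometric_of_lt_one (by norm_num) (by norm_num)] at h
  rw [SA]; norm_num at h ⊢; linarith

lemma SB_le (j : ℕ) : SB t j ≤ 18 := by
  have h := Summable.tsum_le_tsum (termB_le ht0 ht j) (sumB ht0 ht j) (geo_summable.mul_left 9)
  rw [tsum_mul_left, tsum_geometric_of_lt_one (by norm_num) (by norm_num)] at h
  rw [SB]; norm_num at h ⊢; linarith

lemma SA_nonneg (j : ℕ) : 0 ≤ SA t j := tsum_nonneg (termA_nonneg ht0 ht j)
lemma SB_nonneg (j : ℕ) : 0 ≤ SB t j := tsum_nonneg (termB_nonneg ht0 ht j)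

lemma fac_le (j : ℕ) : |t/(1-t^(2*j+3))| ≤ 4/7 := by
  have hβ := beta_le ht0 ht j
  have h1 : (0:ℝ) < 7/8 := by norm_num
  rw [abs_of_nonneg (div_nonneg ht0 (by linarith))]
  calc t/(1-t^(2*j+3)) ≤ (1/2)/(7/8) :=
        div_le_div₀ (by norm_num) ht h1 (by linarith)
  _ = 4/7 := by norm_num

lemma D_bound : ∀ (N j : ℕ), |SA t j - SB t j| ≤ (4/7)^N * 24 := by
  intro N
  induction N with
  | zero =>
    intro j
    have h1 := SA_le ht0 ht j; have h2 := SB_le ht0 ht j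
    have h3 := SA_nonneg ht0 ht j; have h4 := SB_nonneg ht0 ht j
    rw [pow_zero, one_mul, abs_le]; constructor <;> linarith
  | succ N ih =>
    intro j
    have hrec : SA t j - SB t j = (t/(1-t^(2*j+3))) * (SA t (j+1) - SB t (j+1)) := by
      rw [recA ht0 ht j, recB ht0 ht j]; ring
    rw [hrec, abs_mul]
    calc |t/(1-t^(2*j+3))| * |SA t (j+1) - SB t (j+1)| ≤ (4/7) * ((4/7)^N * 24) :=
          mul_le_mul (fac_le ht0 ht j) (ih (j+1)) (abs_nonneg _) (by norm_num)
    _ = (4/7)^(N+1) * 24 := by ring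

lemma SA_eq_SB : SA t 0 = SB t 0 := by
  have htend : Filter.Tendsto (fun N : ℕ => (4/7:ℝ)^N * 24) Filter.atTop (nhds 0) := by
    simpa using (tendsto_pow_atTop_nhds_zero_of_lt_one (by norm_num) (by norm_num : (4/7:ℝ) < 1)).mul_const (24:ℝ)
  have h : |SA t 0 - SB t 0| ≤ 0 :=
    ge_of_tendsto htend (Filter.Eventually.of_forall fun N => D_bound ht0 ht N 0)
  have := abs_nonneg (SA t 0 - SB t 0)
  have h0 : |SA t 0 - SB t 0| = 0 := le_antisymm h this
  rw [abs_eq_zero, sub_eq_zero] at h0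
  exact h0

lemma sumFineL : Summable (fun n => t^(2*n*(n+1)) / (Rr t 1 (n+1))^2) := by
  apply Summable.of_nonneg_of_le (fun n => by positivity) _ (geo_summable.mul_left 9)
  intro n
  have h1 := Rr_ge ht0 ht 1 (n+1) (by omega)
  calc t^(2*n*(n+1)) / (Rr t 1 (n+1))^2 ≤ 9 * t^(2*n*(n+1)) := by
        refine div_le_C_mul _ _ 9 ?_ (by norm_num) ?_
        · positivity
        · nlinarith
  _ ≤ 9 * (1/2)^n := by
      have := pow_big_le ht0 ht n (2*n*(n+1)) (by nlinarith)
      have h0 : (0:ℝ) ≤ t^(2*n*(n+1)) := by positivity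
      nlinarith

lemma sumFineR : Summable (fun n => t^n / Rr t 1 (n+1)) := by
  apply Summable.of_nonneg_of_le
    (fun n => div_nonneg (by positivity) (Rr_pos ht0 ht 1 (n+1) (by omega)).le) _
    (geo_summable.mul_left 3)
  intro n
  calc t^n / Rr t 1 (n+1) ≤ 3 * t^n :=
        div_le_C_mul _ _ 3 (by positivity) (by norm_num) (Rr_ge ht0 ht 1 (n+1) (by omega))
  _ ≤ 3 * (1/2)^n := by have := tn_le ht0 ht n; linarith

lemma fine : ∑' n, t^(2*n*(n+1)) / (Rr t 1 (n+1))^2 = ∑' n, t^n / Rr t 1 (n+1) := by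
  have h1t : (0:ℝ) < 1 - t := by linarith
  have hL : ∀ n : ℕ, t^(2*n*(n+1)) / (Rr t 1 (n+1))^2 = (1-t)⁻¹ * termB t 0 n := by
    intro n
    rw [termB]
    have hY := Rr_pos ht0 ht (1+2) n (by omega)
    have hP1 := Rr_pos ht0 ht 1 (n+1) (by omega)
    have hRw : Rr t 1 (n+1) = (1 - t^1) * Rr t (1+2) n := Rr_succ' t 1 n
    have e1 : 2*0+3 = 1+2 := by norm_num
    rw [e1]
    rw [hRw]
    field_simp
    ring
  have hR : ∀ n : ℕ, t^n / Rr t 1 (n+1) = (1-t)⁻¹ * termA t 0 n := by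
    intro n
    rw [termA]
    have hY := Rr_pos ht0 ht (1+2) n (by omega)
    have hRw : Rr t 1 (n+1) = (1 - t^1) * Rr t (1+2) n := Rr_succ' t 1 n
    have e1 : 2*0+3 = 1+2 := by norm_num
    rw [e1, hRw]
    field_simp
  rw [tsum_congr hL, tsum_congr hR, tsum_mul_left, tsum_mul_left]
  show (1-t)⁻¹ * SB t 0 = (1-t)⁻¹ * SA t 0
  rw [SA_eq_SB ht0 ht]

end

noncomputable def gterm (t : ℝ) (k n : ℕ) : ℝ := (1 - Rr t (2*k-1) n) * t^(n+1) / Rr t 1 (n+1)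
noncomputable def gk (t : ℝ) (k : ℕ) : ℝ := ∑' n, gterm t k n

section G
variable {t : ℝ} {k : ℕ} (ht0 : 0 ≤ t) (ht : t ≤ 1/2) (hk : 1 ≤ k)
include ht0 ht hk

lemma gterm_nonneg (n : ℕ) : 0 ≤ gterm t k n := by
  apply div_nonneg (mul_nonneg _ (by positivity)) (Rr_pos ht0 ht 1 (n+1) (by omega)).le
  have := Rr_le_one ht0 ht (2*k-1) n (by omega); linarith

lemma gterm_le (n : ℕ) : gterm t k n ≤ 4 * (t^(2*k-1) * t^(n+1)) := by
  have h1 := one_sub_Rr_le ht0 ht (2*k-1) n (by omega)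
  have h2 := Rr_le_one ht0 ht (2*k-1) n (by omega)
  have h3 := Rr_ge ht0 ht 1 (n+1) (by omega)
  have h4 : (0:ℝ) ≤ t^(n+1) := by positivity
  have h5 : (0:ℝ) ≤ t^(2*k-1) := by positivity
  calc gterm t k n ≤ 3 * ((1 - Rr t (2*k-1) n) * t^(n+1)) := by
        refine div_le_C_mul _ _ 3 (mul_nonneg (by linarith) h4) (by norm_num) (by linarith)
  _ ≤ 4 * (t^(2*k-1) * t^(n+1)) := by nlinarith

lemma sumg : Summable (fun n => gterm t k n) := by
  apply Summable.of_nonneg_of_le (gterm_nonneg ht0 ht hk) _ (geo_summable.mul_left 4)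
  intro n
  have h1 := gterm_le ht0 ht hk n
  have h2 := te_le ht0 ht (2*k-1) (by omega)
  have h3 := tn_le ht0 ht (n+1)
  have h4 : (0:ℝ) ≤ t^(n+1) := by positivity
  have h5 : ((1:ℝ)/2)^(n+1) ≤ (1/2)^n := by
    rw [pow_succ]; nlinarith [pow_nonneg (by norm_num : (0:ℝ) ≤ 1/2) n]
  have h6 : (0:ℝ) ≤ (1/2:ℝ)^n := by positivity
  calc gterm t k n ≤ 4 * (t^(2*k-1) * t^(n+1)) := h1
  _ ≤ 4 * (1/2)^n := by nlinarith
  _ = 4 * (1/2)^n := rfl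

lemma gk_le : gk t k ≤ 8 * t^(2*k+1) := by
  have h0 : gterm t k 0 = 0 := by simp [gterm, Rr]
  rw [gk, Summable.tsum_eq_zero_add (sumg ht0 ht hk), h0, zero_add]
  have hb : ∀ n : ℕ, gterm t k (n+1) ≤ (4 * t^(2*k+1)) * (1/2)^n := by
    intro n
    have h1 := gterm_le ht0 ht hk (n+1)
    have he : t^(2*k-1) * t^(n+1+1) = t^(2*k+1) * t^n := by
      rw [← pow_add, ← pow_add]; congr 1; omega
    have h3 := tn_le ht0 ht n
    have h5 : (0:ℝ) ≤ t^(2*k+1) := by positivity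
    have h6 : (0:ℝ) ≤ t^n := by positivity
    calc gterm t k (n+1) ≤ 4 * (t^(2*k-1) * t^(n+1+1)) := h1
    _ = 4 * t^(2*k+1) * t^n := by rw [he]; ring
    _ ≤ (4 * t^(2*k+1)) * (1/2)^n := by nlinarith
  calc ∑' n, gterm t k (n+1)
      ≤ ∑' n, (4 * t^(2*k+1)) * (1/2)^n := by
        refine Summable.tsum_le_tsum hb ((summable_nat_add_iff 1).mpr (sumg ht0 ht hk)) (geo_summable.mul_left _)
  _ = (4 * t^(2*k+1)) * 2 := by
        rw [tsum_mul_left, tsum_geometric_of_lt_one (by norm_num) (by norm_num)]; norm_num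
  _ = 8 * t^(2*k+1) := by ring

lemma gk_nonneg : 0 ≤ gk t k := tsum_nonneg (gterm_nonneg ht0 ht hk)

lemma gk_pos (ht0' : 0 < t) : 0 < gk t k := by
  have h1 : gterm t k 1 ≤ gk t k :=
    Summable.le_tsum (sumg ht0 ht hk) 1 (fun j _ => gterm_nonneg ht0 ht hk j)
  have h2 : 0 < gterm t k 1 := by
    rw [gterm]
    have hR1 : Rr t (2*k-1) 1 = 1 - t^(2*k-1) := by
      rw [Rr, Finset.prod_range_one]; norm_num
    rw [hR1]
    have hP := Rr_pos ht0 ht 1 2 (by omega)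
    have hnum : 0 < (1 - (1 - t^(2*k-1))) * t^(1+1) := by
      have : (0:ℝ) < t^(2*k-1) := pow_pos ht0' _
      have : (0:ℝ) < t^(1+1) := pow_pos ht0' _
      nlinarith [pow_pos ht0' (2*k-1), pow_pos ht0' (1+1)]
    positivity
  linarith

lemma sumFk : Summable (fun n => Rr t (2*k-1) n * t^(n+1) / Rr t 1 (n+1)) := by
  apply Summable.of_nonneg_of_le
    (fun n => div_nonneg (mul_nonneg (Rr_pos ht0 ht (2*k-1) n (by omega)).le (by positivity))
      (Rr_pos ht0 ht 1 (n+1) (by omega)).le)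
    _ (geo_summable.mul_left 3)
  intro n
  have h2 := Rr_le_one ht0 ht (2*k-1) n (by omega)
  have h2' := (Rr_pos ht0 ht (2*k-1) n (by omega)).le
  have h4 : (0:ℝ) ≤ t^(n+1) := by positivity
  have h3 := tn_le ht0 ht (n+1)
  have h5 : ((1:ℝ)/2)^(n+1) ≤ (1/2)^n := by
    rw [pow_succ]; nlinarith [pow_nonneg (by norm_num : (0:ℝ) ≤ 1/2) n]
  calc Rr t (2*k-1) n * t^(n+1) / Rr t 1 (n+1) ≤ 3 * (Rr t (2*k-1) n * t^(n+1)) :=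
        div_le_C_mul _ _ 3 (mul_nonneg h2' h4) (by norm_num) (Rr_ge ht0 ht 1 (n+1) (by omega))
  _ ≤ 3 * (1/2)^n := by nlinarith


lemma real_diff :
    t * (∑' n, t^(2*n*(n+1))/(Rr t 1 (n+1))^2)
      - (∑' n, Rr t (2*k-1) n * t^(n+1) / Rr t 1 (n+1)) = gk t k := by
  rw [fine ht0 ht, ← tsum_mul_left, ← Summable.tsum_sub ((sumFineR ht0 ht).mul_left t) (sumFk ht0 ht hk)]
  apply tsum_congr
  intro n
  rw [gterm]
  rw [pow_succ]
  ring

end G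

lemma qPoch_real (t : ℝ) (e n : ℕ) : qPoch ((t:ℂ)^e) ((t:ℂ)^2) n = ((Rr t e n : ℝ) : ℂ) := by
  rw [qPoch, Rr]
  push_cast
  apply Finset.prod_congr rfl
  intro i _
  congr 1
  rw [← pow_mul, ← pow_add]

lemma omega_real (t : ℝ) :
    omegaMock (t:ℂ) = ((∑' n, t^(2*n*(n+1))/(Rr t 1 (n+1))^2 : ℝ) : ℂ) := by
  rw [omegaMock, Complex.ofReal_tsum]
  apply tsum_congr
  intro n
  have h := qPoch_real t 1 (n+1)
  rw [pow_one] at h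
  rw [h]
  push_cast
  ring

lemma F_real (t : ℝ) (k : ℕ) :
    F k (t:ℂ) = ((∑' n, Rr t (2*k-1) n * t^(n+1) / Rr t 1 (n+1) : ℝ) : ℂ) := by
  rw [F, Complex.ofReal_tsum]
  apply tsum_congr
  intro n
  have h1 := qPoch_real t (2*k-1) n
  have h2 := qPoch_real t 1 (n+1)
  rw [pow_one] at h2
  rw [h1, h2]
  push_cast
  ring

lemma main_diff {t : ℝ} {k : ℕ} (ht0 : 0 ≤ t) (ht : t ≤ 1/2) (hk : 1 ≤ k) :
    (t:ℂ) * omegaMock ↑t - F k ↑t = ((gk t k : ℝ) : ℂ) := by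
  rw [omega_real, F_real, ← real_diff ht0 ht hk]
  push_cast
  ring

/-- For `1 ≤ m ≤ 2k`, the coefficient of `q^m` in `q·ω(q) − F_{k,1}(q)` vanishes:
any power-series expansion of `q·ω(q) − F_{k,1}(q)` on the unit disc has `m`-th
coefficient zero. -/
theorem stmt4 (k : ℕ) (hk : 1 ≤ k) (c : ℕ → ℂ)
    (hc : ∀ q : ℂ, ‖q‖ < 1 → q * omegaMock q - F k q = ∑' n : ℕ, c n * q ^ n)
    (m : ℕ) (hm1 : 1 ≤ m) (hm2 : m ≤ 2 * k) : c m = 0 := by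
  -- Step 1: summability at q = 1/2, giving a geometric bound on ‖c n‖
  have h12 : ‖((1/2:ℝ):ℂ)‖ < 1 := by
    rw [Complex.norm_real]; norm_num
  have hval := hc ((1/2:ℝ):ℂ) h12
  rw [main_diff (by norm_num) (by norm_num) hk] at hval
  have hgpos : 0 < gk (1/2) k := gk_pos (by norm_num) (by norm_num) hk (by norm_num)
  have hsum12 : Summable (fun n => c n * ((1/2:ℝ):ℂ)^n) := by
    by_contra hns
    rw [tsum_eq_zero_of_not_summable hns] at hval
    exact absurd (Complex.ofReal_eq_zero.mp hval) hgpos.ne'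
  have hnorm12 : Summable (fun n => ‖c n‖ * (1/2:ℝ)^n) := by
    have := summable_norm_iff.mpr hsum12
    convert this using 2 with n
    rw [norm_mul, norm_pow, Complex.norm_real]
    norm_num
  set K := ∑' n, ‖c n‖ * (1/2:ℝ)^n with hKdef
  have hK0 : 0 ≤ K := tsum_nonneg (fun n => by positivity)
  have hK : ∀ n, ‖c n‖ ≤ K * 2^n := by
    intro n
    have h1 : ‖c n‖ * (1/2:ℝ)^n ≤ K := Summable.le_tsum hnorm12 n (fun j _ => by positivity)
    have h2 : ((1:ℝ)/2)^n * 2^n = 1 := by rw [← mul_pow]; norm_num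
    calc ‖c n‖ = (‖c n‖ * (1/2)^n) * 2^n := by rw [mul_assoc, h2, mul_one]
    _ ≤ K * 2^n := mul_le_mul_of_nonneg_right h1 (by positivity)
  -- Step 2: strong induction
  have key : ∀ m, m ≤ 2*k → c m = 0 := by
    intro m
    induction m using Nat.strong_induction_on with
    | _ m ih =>
    intro hm
    have hest : ∀ t : ℝ, 0 < t → t ≤ 1/4 → ‖c m‖ ≤ (12 + K * 2^(m+2)) * t := by
      intro t ht0' ht4
      have ht0 : 0 ≤ t := ht0'.le
      have ht : t ≤ 1/2 := by linarith
      have hq1 : ‖(t:ℂ)‖ < 1 := by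
        rw [Complex.norm_real, Real.norm_of_nonneg ht0]; linarith
      have hdiff := hc ↑t hq1
      rw [main_diff ht0 ht hk] at hdiff
      have h2t : 2 * t ≤ 1/2 := by linarith
      have hgeo : ∀ (a : ℕ), ∀ n : ℕ, ‖c (n + a) * (t:ℂ)^n‖ ≤ (K * 2^a) * (1/2)^n := by
        intro a n
        rw [norm_mul, norm_pow, Complex.norm_real, Real.norm_of_nonneg ht0]
        have h1 := hK (n + a)
        have h3 : (0:ℝ) ≤ t^n := by positivity
        have h4 : (2:ℝ)^(n+a) = 2^n * 2^a := by rw [pow_add]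
        have h5 : (2:ℝ)^n * t^n ≤ (1/2)^n := by
          rw [← mul_pow]
          apply pow_le_pow_left₀ (by positivity) h2t
        have h6 : (0:ℝ) ≤ (2:ℝ)^a := by positivity
        have h7 : (0:ℝ) ≤ (2:ℝ)^n := by positivity
        calc ‖c (n+a)‖ * t^n ≤ (K * 2^(n+a)) * t^n := mul_le_mul_of_nonneg_right h1 h3
        _ = (K * 2^a) * (2^n * t^n) := by rw [h4]; ring
        _ ≤ (K * 2^a) * (1/2)^n := by
            apply mul_le_mul_of_nonneg_left h5 (by positivity)
      have hsumt : Summable (fun n => c n * (t:ℂ)^n) := by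
        apply Summable.of_norm
        apply Summable.of_nonneg_of_le (fun n => norm_nonneg _) _ (geo_summable.mul_left (K * 2^0))
        intro n
        simpa using hgeo 0 n
      rw [← hsumt.sum_add_tsum_nat_add m] at hdiff
      have hzero : ∑ i ∈ Finset.range m, c i * (↑t:ℂ)^i = 0 :=
        Finset.sum_eq_zero fun i hi => by
          rw [ih i (Finset.mem_range.mp hi) (le_trans (Nat.le_of_lt (Finset.mem_range.mp hi)) hm),
            zero_mul]
      rw [hzero, zero_add] at hdiff
      have hfact : ∀ n : ℕ, c (n+m) * (↑t:ℂ)^(n+m) = (c (n+m) * (↑t:ℂ)^n) * (↑t:ℂ)^m := by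
        intro n; rw [pow_add]; ring
      rw [tsum_congr hfact, tsum_mul_right] at hdiff
      set S := ∑' n, c (n+m) * (↑t:ℂ)^n with hSdef
      have hsumS : Summable (fun n => c (n+m) * (t:ℂ)^n) := by
        apply Summable.of_norm
        apply Summable.of_nonneg_of_le (fun n => norm_nonneg _) (hgeo m) (geo_summable.mul_left _)
      have htm : (0:ℝ) < t^m := pow_pos ht0' m
      have hSnorm : ‖S‖ * t^m = gk t k := by
        have := congrArg norm hdiff
        rw [Complex.norm_real, Real.norm_of_nonneg (gk_nonneg ht0 ht hk), norm_mul, norm_pow,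
          Complex.norm_real, Real.norm_of_nonneg ht0] at this
        exact this.symm
      have h1 : ‖S‖ ≤ 12 * t := by
        have hgk := gk_le ht0 ht hk
        have hle : t^(2*k+1) ≤ t^(m+1) :=
          pow_le_pow_of_le_one ht0 (by linarith) (by omega)
        have h2 : ‖S‖ * t^m ≤ 8 * (t * t^m) := by
          rw [hSnorm]
          calc gk t k ≤ 8 * t^(2*k+1) := hgk
          _ ≤ 8 * t^(m+1) := by linarith
          _ = 8 * (t * t^m) := by rw [pow_succ]; ring
        have := (mul_le_mul_iff_left₀ htm).mp (by linarith [h2] : ‖S‖ * t^m ≤ (8*t) * t^m)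
        linarith
      have hS0 : S = c m + ∑' n, c (n+1+m) * (↑t:ℂ)^(n+1) := by
        rw [hSdef, Summable.tsum_eq_zero_add hsumS]
        simp
      have h2 : ‖S - c m‖ ≤ K * 2^(m+2) * t := by
        rw [hS0, add_sub_cancel_left]
        have hsumtail : Summable (fun n => ‖c (n+1+m) * (↑t:ℂ)^(n+1)‖) := by
          apply Summable.of_nonneg_of_le (fun n => norm_nonneg _) _
            (geo_summable.mul_left (K * 2^(m+1) * t))
          intro n
          have := hgeo (1+m) n
          rw [norm_mul, norm_pow, Complex.norm_real, Real.norm_of_nonneg ht0] at this ⊢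
          rw [pow_succ]
          have h7 : ‖c (n+(1+m))‖ * t^n ≤ K * 2^(1+m) * (1/2)^n := this
          have h8 : (0:ℝ) ≤ (1/2:ℝ)^n := by positivity
          have h9 : n+1+m = n+(1+m) := by omega
          rw [h9]
          have h10 : (2:ℝ)^(1+m) = 2^(m+1) := by congr 1; omega
          rw [h10] at h7
          linarith [mul_le_mul_of_nonneg_right h7 ht0]
        calc ‖∑' n, c (n+1+m) * (↑t:ℂ)^(n+1)‖ ≤ ∑' n, ‖c (n+1+m) * (↑t:ℂ)^(n+1)‖ :=
              norm_tsum_le_tsum_norm hsumtail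
        _ ≤ ∑' n : ℕ, (K * 2^(m+1) * t) * (1/2)^n := by
            apply Summable.tsum_le_tsum _ hsumtail (geo_summable.mul_left _)
            intro n
            have := hgeo (1+m) n
            rw [norm_mul, norm_pow, Complex.norm_real, Real.norm_of_nonneg ht0] at this ⊢
            rw [pow_succ]
            have h9 : n+1+m = n+(1+m) := by omega
            rw [h9]
            have h10 : (2:ℝ)^(1+m) = 2^(m+1) := by congr 1; omega
            rw [h10] at this
            linarith [mul_le_mul_of_nonneg_right this ht0]
        _ = (K * 2^(m+1) * t) * 2 := by
            rw [tsum_mul_left, tsum_geometric_of_lt_one (by norm_num) (by norm_num)]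
            norm_num
        _ = K * 2^(m+2) * t := by rw [pow_succ]; ring
      calc ‖c m‖ = ‖S - (S - c m)‖ := by congr 1; ring
      _ ≤ ‖S‖ + ‖S - c m‖ := norm_sub_le _ _
      _ ≤ 12 * t + K * 2^(m+2) * t := add_le_add h1 h2
      _ = (12 + K * 2^(m+2)) * t := by ring
    -- conclude c m = 0
    by_contra hne
    have hpos : 0 < ‖c m‖ := norm_pos_iff.mpr hne
    set C : ℝ := 12 + K * 2^(m+2) with hCdef
    have hCpos : 0 < C := by positivity
    set t0 : ℝ := min (1/4) (‖c m‖ / (2*C)) with ht0def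
    have ht0pos : 0 < t0 := lt_min (by norm_num) (by positivity)
    have ht04 : t0 ≤ 1/4 := min_le_left _ _
    have hb := hest t0 ht0pos ht04
    have : C * t0 ≤ C * (‖c m‖ / (2*C)) :=
      mul_le_mul_of_nonneg_left (min_le_right _ _) hCpos.le
    have hhalf : C * (‖c m‖ / (2*C)) = ‖c m‖ / 2 := by field_simp
    rw [hhalf] at this
    rw [mul_comm] at hb
    have : ‖c m‖ ≤ ‖c m‖ / 2 := by calc ‖c m‖ ≤ t0 * C := hb
                                    _ = C * t0 := mul_comm _ _
                                    _ ≤ ‖c m‖ / 2 := this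
    linarith
  exact key m hm2
end

section
/- The formal power series (1+q^2)/((1−q^3)(1−q^7)) − q^2/((1−q^3)(1−q^5)) has nonnegative coefficients; in fact it equals 1/(1−q^3) + q^9/((1−q^5)(1−q^7)). -/
open PowerSeries

/-- geometric series with step m -/
noncomputable def S (m : ℕ) : PowerSeries ℝ := PowerSeries.mk fun n => if m ∣ n then 1 else 0

lemma cc (m : ℕ) (hm : 0 < m) : constantCoeff (1 - X ^ m : PowerSeries ℝ) ≠ 0 := by
  simp [hm.ne']

lemma geom (m : ℕ) (hm : 0 < m) : (1 - X ^ m : PowerSeries ℝ)⁻¹ = S m := by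
  rw [PowerSeries.inv_eq_iff_mul_eq_one (cc m hm)]
  ext n
  rw [mul_sub, mul_one]
  simp only [map_sub, PowerSeries.coeff_mul_X_pow', S, coeff_mk, coeff_one]
  rcases lt_or_ge n m with h | h
  · rcases Nat.eq_zero_or_pos n with rfl | hn
    · simp [hm.ne']
    · have : ¬ m ∣ n := fun hd => absurd (Nat.le_of_dvd hn hd) (not_le.2 h)
      simp [this, hn.ne', h.not_ge]
  · have hd : m ∣ n ↔ m ∣ n - m := by
      constructor
      · intro hd; exact (Nat.dvd_sub hd dvd_rfl)
      · intro hd; have := Nat.dvd_add hd (dvd_refl m); rwa [Nat.sub_add_cancel h] at this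
    have hn : n ≠ 0 := by omega
    by_cases h3 : m ∣ n
    · simp [h, h3, hd.mp h3, hn]
    · simp [h, h3, hd.not.mp h3, hn]

lemma S_nonneg (m n : ℕ) : 0 ≤ coeff n (S m) := by
  simp only [S, coeff_mk]; positivity

lemma mul_nonneg' {f g : PowerSeries ℝ} (hf : ∀ n, 0 ≤ coeff n f)
    (hg : ∀ n, 0 ≤ coeff n g) (n : ℕ) : 0 ≤ coeff n (f * g) := by
  rw [coeff_mul]
  exact Finset.sum_nonneg fun p _ => mul_nonneg (hf _) (hg _)

lemma Smul (m : ℕ) (hm : 0 < m) : S m * (1 - X ^ m : PowerSeries ℝ) = 1 := by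
  rw [← geom m hm]
  exact PowerSeries.inv_mul_cancel _ (cc m hm)

/-- The series `(1+q^2)/((1−q^3)(1−q^7)) − q^2/((1−q^3)(1−q^5))`. -/
noncomputable def A : PowerSeries ℝ :=
  (1 + X ^ 2) * ((1 - X ^ 3)⁻¹ * (1 - X ^ 7)⁻¹) - X ^ 2 * ((1 - X ^ 3)⁻¹ * (1 - X ^ 5)⁻¹)

/-- `A` equals `1/(1−q^3) + q^9/((1−q^5)(1−q^7))` and has nonnegative coefficients. -/
theorem stmt13 :
    A = (1 - X ^ 3)⁻¹ + X ^ 9 * ((1 - X ^ 5)⁻¹ * (1 - X ^ 7)⁻¹) ∧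
      ∀ n : ℕ, 0 ≤ PowerSeries.coeff n A := by
  have g3 := geom 3 (by norm_num)
  have g5 := geom 5 (by norm_num)
  have g7 := geom 7 (by norm_num)
  have h3 := Smul 3 (by norm_num)
  have h5 := Smul 5 (by norm_num)
  have h7 := Smul 7 (by norm_num)
  set a := S 3
  set b := S 5
  set c := S 7
  set u := (1 - X ^ 3 : PowerSeries ℝ)
  set v := (1 - X ^ 5 : PowerSeries ℝ)
  set w := (1 - X ^ 7 : PowerSeries ℝ)
  have key : A = u⁻¹ + X ^ 9 * (v⁻¹ * w⁻¹) := by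
    unfold A
    rw [g3, g5, g7]
    have hD : (u * (v * w) : PowerSeries ℝ) ≠ 0 := by
      intro h
      have := congrArg (constantCoeff) h
      simp [u, v, w] at this
    apply mul_right_cancel₀ hD
    linear_combination (((1 + X ^ 2) * c * v * w - X ^ 2 * b * v * w - v * w)) * h3 +
      ((-(X ^ 9) * u * c * w - X ^ 2 * w)) * h5 + ((-(X ^ 9) * u + (1 + X ^ 2) * v)) * h7
  refine ⟨key, fun n => ?_⟩
  rw [key, g3, g5, g7, map_add]
  refine add_nonneg (S_nonneg 3 n) ?_
  rw [PowerSeries.coeff_X_pow_mul']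
  split
  · exact mul_nonneg' (S_nonneg 5) (S_nonneg 7) _
  · exact le_refl 0
end
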